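/- arXiv:1201.2557 — 2 statements merged into one kernel-verified Lean document; each statement's English description precedes it below -/
import Mathlib

section
/- Let V = F_2^{2g} with standard symplectic form. The Arf invariant arf(q) := Σ_{i=1}^g q(e_i)q(f_i) of a quadratic form q ∈ Q(V) is independent of the choice of symplectic basis: if (e_1,...,e_g,f_1,...,f_g) and (e'_1,...,e'_g,f'_1,...,f'_g) are two symplectic bases of V, then Σ_i q(e_i)q(f_i) = Σ_i q(e'_i)q(f'_i). -/
/-!
The Gauss sum `∑ v, (-1) ^ q v` does not refer to any basis. In a symplectic basis, `V` is the
orthogonal sum of the hyperbolic planes spanned by `e i, f i`, so `q` is additive across them, and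
the plane with `q (e i) = α`, `q (f i) = β` contributes `2 * (-1) ^ (α * β)`. Hence the Gauss sum
equals `2 ^ g * (-1) ^ arf q` in every symplectic basis, and it determines `arf q`.
-/

open Finset

lemma AddChar.map_sum_eq_prod {ι A M : Type*} [AddCommMonoid A] [CommMonoid M]
    (ψ : AddChar A M) (s : Finset ι) (f : ι → A) :
    ψ (∑ i ∈ s, f i) = ∏ i ∈ s, ψ (f i) := by
  induction s using Finset.cons_induction with
  | empty => simp
  | cons a s ha ih => rw [sum_cons, prod_cons, AddChar.map_add_eq_mul, ih]

def signChar : AddChar (ZMod 2) ℤ where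
  toFun x := (-1) ^ x.val
  map_zero_eq_one' := rfl
  map_add_eq_mul' := by decide

lemma signChar_injective : Function.Injective signChar := by
  intro x y
  revert x y
  decide

def IsQuadraticRefinement {R V : Type*} [CommRing R] [AddCommGroup V] [Module R V]
    (B : V →ₗ[R] V →ₗ[R] R) (q : V → R) : Prop :=
  ∀ x y, q (x + y) = q x + q y + B x y

structure IsSymplecticBasis {ι R V : Type*} [DecidableEq ι] [CommRing R] [AddCommGroup V]
    [Module R V] (B : V →ₗ[R] V →ₗ[R] R) (b : ι ⊕ ι → V) : Prop where
  inl_inr : ∀ i j, B (b (.inl i)) (b (.inr j)) = if i = j then 1 else 0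
  inl_inl : ∀ i j, B (b (.inl i)) (b (.inl j)) = 0
  inr_inr : ∀ i j, B (b (.inr i)) (b (.inr j)) = 0

namespace IsQuadraticRefinement

variable {R V : Type*} [CommRing R] [AddCommGroup V] [Module R V]
  {B : V →ₗ[R] V →ₗ[R] R} {q : V → R}

lemma map_zero (hq : IsQuadraticRefinement B q) : q 0 = 0 := by
  simpa using hq 0 0

lemma polar_comm (hq : IsQuadraticRefinement B q) (x y : V) : B x y = B y x := by
  have hxy := hq x y
  rw [add_comm x, hq y x] at hxy
  linear_combination -hxy

lemma isSymm (hq : IsQuadraticRefinement B q) : B.IsSymm :=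
  ⟨hq.polar_comm⟩

lemma map_sum_of_pairwise {ι : Type*} (hq : IsQuadraticRefinement B q) (s : Finset ι)
    (x : ι → V) (hx : (s : Set ι).Pairwise fun i j => B (x i) (x j) = 0) :
    q (∑ i ∈ s, x i) = ∑ i ∈ s, q (x i) := by
  induction s using Finset.cons_induction with
  | empty => simpa using hq.map_zero
  | cons a s ha ih =>
    rw [coe_cons, Set.pairwise_insert] at hx
    have horth : B (x a) (∑ i ∈ s, x i) = 0 :=
      (map_sum _ _ _).trans <| sum_eq_zero fun i hi =>
        (hx.2 i hi fun h => ha (h ▸ hi)).1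
    rw [sum_cons, sum_cons, hq, horth, add_zero, ih hx.1]

end IsQuadraticRefinement

lemma IsSymplecticBasis.apply_pair_pair_eq_zero {ι R V : Type*} [DecidableEq ι] [CommRing R]
    [AddCommGroup V] [Module R V] {B : V →ₗ[R] V →ₗ[R] R} {b : ι ⊕ ι → V}
    (hb : IsSymplecticBasis B b) (hB : B.IsSymm) {i j : ι} (hij : i ≠ j) (p r : R × R) :
    B (p.1 • b (.inl i) + p.2 • b (.inr i)) (r.1 • b (.inl j) + r.2 • b (.inr j)) = 0 := by
  have hji : B (b (.inr i)) (b (.inl j)) = 0 := by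
    rw [← hB.eq]
    simpa [hij.symm] using hb.inl_inr j i
  simp [hb.inl_inr, hb.inl_inl, hb.inr_inr, hij, hji]

lemma Module.Basis.sum_eq_sum_coord_pairs {ι R V M : Type*} [Fintype ι] [DecidableEq ι]
    [CommRing R] [Fintype R] [AddCommGroup V] [Module R V] [Fintype V] [AddCommMonoid M]
    (b : Basis (ι ⊕ ι) R V) (f : V → M) :
    ∑ v, f v = ∑ c : ι → R × R, f (∑ i, ((c i).1 • b (.inl i) + (c i).2 • b (.inr i))) := by
  let E : (ι → R × R) ≃ V := (Equiv.arrowProdEquivProdArrow _ _ _).trans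
    ((Equiv.sumArrowEquivProdArrow _ _ _).symm.trans b.equivFun.symm.toEquiv)
  rw [← E.sum_comp]
  refine sum_congr rfl fun c _ => congrArg f ?_
  simp [E, Basis.equivFun_symm_apply, Fintype.sum_sum_type, sum_add_distrib]

namespace IsQuadraticRefinement

variable {V : Type*} [AddCommGroup V] [Module (ZMod 2) V]
  {B : V →ₗ[ZMod 2] V →ₗ[ZMod 2] ZMod 2} {q : V → ZMod 2}

lemma map_smul (hq : IsQuadraticRefinement B q) (a : ZMod 2) (v : V) : q (a • v) = a * q v := by
  obtain rfl | rfl : a = 0 ∨ a = 1 := by revert a; decide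
  · simp [hq.map_zero]
  · simp

lemma map_smul_add_smul (hq : IsQuadraticRefinement B q) {e f : V} (hef : B e f = 1)
    (a c : ZMod 2) : q (a • e + c • f) = a * q e + c * q f + a * c := by
  simp only [hq (a • e), hq.map_smul, _root_.map_smul, LinearMap.smul_apply, hef, smul_eq_mul,
    mul_one, add_right_inj]
  ring

lemma map_sum_symplectic {ι : Type*} [Fintype ι] [DecidableEq ι]
    (hq : IsQuadraticRefinement B q) {b : ι ⊕ ι → V} (hb : IsSymplecticBasis B b)
    (c : ι → ZMod 2 × ZMod 2) :
    q (∑ i, ((c i).1 • b (.inl i) + (c i).2 • b (.inr i))) =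
      ∑ i, ((c i).1 * q (b (.inl i)) + (c i).2 * q (b (.inr i)) + (c i).1 * (c i).2) := by
  rw [hq.map_sum_of_pairwise _ _ fun i _ j _ hij =>
    hb.apply_pair_pair_eq_zero hq.isSymm hij _ _]
  refine sum_congr rfl fun i _ => hq.map_smul_add_smul ?_ _ _
  simpa using hb.inl_inr i i

end IsQuadraticRefinement

/-- The contribution of one hyperbolic plane, with `q e = α` and `q f = β`. -/
lemma sum_signChar_hyperbolic (α β : ZMod 2) :
    ∑ p : ZMod 2 × ZMod 2, signChar (p.1 * α + p.2 * β + p.1 * p.2) = 2 * signChar (α * β) := by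
  revert α β
  decide

theorem sum_signChar_eq_of_isSymplecticBasis {ι V : Type*} [Fintype ι] [DecidableEq ι]
    [AddCommGroup V] [Module (ZMod 2) V] [Fintype V] {B : V →ₗ[ZMod 2] V →ₗ[ZMod 2] ZMod 2}
    {q : V → ZMod 2} (hq : IsQuadraticRefinement B q) (b : Module.Basis (ι ⊕ ι) (ZMod 2) V)
    (hb : IsSymplecticBasis B b) :
    ∑ v, signChar (q v) =
      2 ^ Fintype.card ι * signChar (∑ i, q (b (.inl i)) * q (b (.inr i))) := by
  calc ∑ v, signChar (q v)
      = ∑ c : ι → ZMod 2 × ZMod 2, ∏ i,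
          signChar ((c i).1 * q (b (.inl i)) + (c i).2 * q (b (.inr i)) + (c i).1 * (c i).2) := by
        simp_rw [b.sum_eq_sum_coord_pairs, hq.map_sum_symplectic hb, signChar.map_sum_eq_prod]
    _ = ∏ i, ∑ p : ZMod 2 × ZMod 2,
          signChar (p.1 * q (b (.inl i)) + p.2 * q (b (.inr i)) + p.1 * p.2) := by
        rw [Fintype.prod_sum]
    _ = 2 ^ Fintype.card ι * signChar (∑ i, q (b (.inl i)) * q (b (.inr i))) := by
        simp_rw [sum_signChar_hyperbolic, prod_mul_distrib, prod_const, card_univ,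
          signChar.map_sum_eq_prod]

theorem arf_independent_of_symplectic_basis_general (g : ℕ)
    (V : Type*) [AddCommGroup V] [Module (ZMod 2) V]
    (B : V →ₗ[ZMod 2] V →ₗ[ZMod 2] ZMod 2)
    (b b' : Module.Basis (Fin g ⊕ Fin g) (ZMod 2) V)
    (hb1 : ∀ i j, B (b (.inl i)) (b (.inr j)) = if i = j then 1 else 0)
    (hb2 : ∀ i j, B (b (.inl i)) (b (.inl j)) = 0)
    (hb3 : ∀ i j, B (b (.inr i)) (b (.inr j)) = 0)
    (hb'1 : ∀ i j, B (b' (.inl i)) (b' (.inr j)) = if i = j then 1 else 0)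
    (hb'2 : ∀ i j, B (b' (.inl i)) (b' (.inl j)) = 0)
    (hb'3 : ∀ i j, B (b' (.inr i)) (b' (.inr j)) = 0)
    (q : V → ZMod 2) (hq : ∀ x y, q (x + y) = q x + q y + B x y) :
    ∑ i, q (b (.inl i)) * q (b (.inr i)) = ∑ i, q (b' (.inl i)) * q (b' (.inr i)) := by
  let _ := Module.fintypeOfFintype b
  have hgauss := (sum_signChar_eq_of_isSymplecticBasis hq b ⟨hb1, hb2, hb3⟩).symm.trans
    (sum_signChar_eq_of_isSymplecticBasis hq b' ⟨hb'1, hb'2, hb'3⟩)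
  exact signChar_injective (mul_left_cancel₀ (by positivity) hgauss)

theorem arf_independent_of_symplectic_basis (g : ℕ)
    (V : Type*) [AddCommGroup V] [Module (ZMod 2) V]
    (B : V →ₗ[ZMod 2] V →ₗ[ZMod 2] ZMod 2)
    (halt : ∀ x, B x x = 0)
    (b b' : Module.Basis (Fin g ⊕ Fin g) (ZMod 2) V)
    (hb1 : ∀ i j, B (b (.inl i)) (b (.inr j)) = if i = j then 1 else 0)
    (hb2 : ∀ i j, B (b (.inl i)) (b (.inl j)) = 0)
    (hb3 : ∀ i j, B (b (.inr i)) (b (.inr j)) = 0)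
    (hb'1 : ∀ i j, B (b' (.inl i)) (b' (.inr j)) = if i = j then 1 else 0)
    (hb'2 : ∀ i j, B (b' (.inl i)) (b' (.inl j)) = 0)
    (hb'3 : ∀ i j, B (b' (.inr i)) (b' (.inr j)) = 0)
    (q : V → ZMod 2) (hq : ∀ x y, q (x + y) = q x + q y + B x y) :
    ∑ i, q (b (.inl i)) * q (b (.inr i)) = ∑ i, q (b' (.inl i)) * q (b' (.inr i)) :=
  arf_independent_of_symplectic_basis_general g V B b b' hb1 hb2 hb3 hb'1 hb'2 hb'3 q hq
end

section
/- Let V be a symplectic F_2-vector space of dimension 2g (g ≥ 1), and let S ⊆ Q(V) be a set of quadratic forms such that every 3-element subset of S is syzygetic. Then the set of vectors {q_0 + q : q ∈ S} ⊆ V (for any fixed q_0 ∈ S) spans an isotropic subspace of V; consequently |S| ≤ 2^g. -/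
/-- `F₂^{2g}` as `F₂^g × F₂^g`. -/
abbrev V (g : ℕ) := (Fin g → ZMod 2) × (Fin g → ZMod 2)

/-- The standard symplectic form `⟨(x,y),(x',y')⟩ = x·y' + x'·y` on `F₂^{2g}`. -/
def B {g : ℕ} (u v : V g) : ZMod 2 := ∑ i, u.1 i * v.2 i + ∑ i, v.1 i * u.2 i

/-- Quadratic forms with polarity the standard symplectic form. -/
def IsQuad {g : ℕ} (q : V g → ZMod 2) : Prop :=
  ∀ u v, q (u + v) = q u + q v + B u v

/-- The Arf invariant with respect to the standard symplectic basis. -/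
def arf {g : ℕ} (q : V g → ZMod 2) : ZMod 2 :=
  ∑ i, q (Pi.single i 1, 0) * q (0, Pi.single i 1)

/-!
Fix `q₀ ∈ S`. For `q ∈ S` the difference `q + q₀` is additive, hence a linear functional, so by
nondegeneracy `q = q₀ + ⟨v_q, ·⟩` for a unique `v_q`. For distinct `q, q' ≠ q₀` the triple
`{q₀, q, q'}` is syzygetic, which says exactly `⟨v_q, v_q'⟩ = 0`; the remaining pairs are
orthogonal because `v_{q₀} = 0` and the form is alternating. So the `v_q` span an isotropic
subspace `W ⊆ W^⊥`, and `dim W + dim W^⊥ = 2g` gives `dim W ≤ g`. Finally `q ↦ v_q` is injective,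
so `|S| ≤ |W| ≤ 2^g`.
-/

namespace LinearMap.BilinForm

open Module

theorem span_le_orthogonal_span {R M : Type*} [CommRing R] [AddCommGroup M] [Module R M]
    {B : LinearMap.BilinForm R M} {s : Set M} (hs : ∀ x ∈ s, ∀ y ∈ s, B x y = 0) :
    Submodule.span R s ≤ B.orthogonal (Submodule.span R s) := by
  refine Submodule.span_le.2 fun y hy n hn => ?_
  have : Submodule.span R s ≤ LinearMap.ker (B.flip y) :=
    Submodule.span_le.2 fun x hx => hs x hx y hy
  exact this hn

theorem two_mul_finrank_le_of_le_orthogonal {K E : Type*} [Field K] [AddCommGroup E]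
    [Module K E] [FiniteDimensional K E] {B : LinearMap.BilinForm K E} (hB : B.Nondegenerate)
    {W : Submodule K E} (hW : W ≤ B.orthogonal W) :
    2 * finrank K W ≤ finrank K E := by
  have hle := Submodule.finrank_mono hW
  rw [finrank_orthogonal hB] at hle
  have := Submodule.finrank_le W
  omega

end LinearMap.BilinForm

section SymplecticForm

variable {g : ℕ}

lemma B_add_left (u u' v : V g) : B (u + u') v = B u v + B u' v := by
  simp only [B, Prod.fst_add, Prod.snd_add, Pi.add_apply, add_mul, mul_add,
    Finset.sum_add_distrib]
  ring

lemma B_add_right (u v v' : V g) : B u (v + v') = B u v + B u v' := by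
  simp only [B, Prod.fst_add, Prod.snd_add, Pi.add_apply, add_mul, mul_add,
    Finset.sum_add_distrib]
  ring

lemma B_smul_left (c : ZMod 2) (u v : V g) : B (c • u) v = c * B u v := by
  simp [B, Finset.mul_sum, mul_add, mul_assoc, mul_left_comm]

lemma B_smul_right (c : ZMod 2) (u v : V g) : B u (c • v) = c * B u v := by
  simp [B, Finset.mul_sum, mul_add, mul_assoc, mul_left_comm]

lemma B_self (v : V g) : B v v = 0 :=
  CharTwo.add_self_eq_zero _

lemma B_single_snd (v : V g) (i : Fin g) : B v (0, Pi.single i 1) = v.1 i := by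
  simp [B, Pi.single_apply]

lemma B_single_fst (v : V g) (i : Fin g) : B v (Pi.single i 1, 0) = v.2 i := by
  simp [B, Pi.single_apply]

def Bform (g : ℕ) : LinearMap.BilinForm (ZMod 2) (V g) :=
  LinearMap.mk₂ (ZMod 2) B B_add_left B_smul_left B_add_right B_smul_right

@[simp]
lemma Bform_apply (u v : V g) : Bform g u v = B u v := rfl

lemma Bform_nondegenerate : (Bform g).Nondegenerate := by
  have hrefl : (Bform g).IsRefl := fun u v h => by
    simpa only [Bform_apply, B, add_comm] using h
  refine hrefl.nondegenerate_iff_separatingLeft.2 fun v hv => ?_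
  ext i
  · simpa [B_single_snd] using hv (0, Pi.single i 1)
  · simpa [B_single_fst] using hv (Pi.single i 1, 0)

lemma eq_of_B_eq {v v' : V g} (h : ∀ x, B v x = B v' x) : v = v' :=
  ((Bform g).toDual Bform_nondegenerate).injective (LinearMap.ext h)

lemma finrank_V : Module.finrank (ZMod 2) (V g) = 2 * g := by
  simp [Module.finrank_prod, two_mul]

end SymplecticForm

section QuadraticForms

variable {g : ℕ}

lemma IsQuad.exists_eq_add_B {q q₀ : V g → ZMod 2} (hq : IsQuad q) (hq₀ : IsQuad q₀) :
    ∃ v : V g, ∀ x, q x = q₀ x + B v x := by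
  have hadd : ∀ u w : V g, q (u + w) + q₀ (u + w) = (q u + q₀ u) + (q w + q₀ w) := by
    intro u w
    rw [hq, hq₀]
    grind
  let ℓ : Module.Dual (ZMod 2) (V g) :=
    (AddMonoidHom.mk' (fun x => q x + q₀ x) hadd).toZModLinearMap 2
  refine ⟨((Bform g).toDual Bform_nondegenerate).symm ℓ, fun x => ?_⟩
  rw [← Bform_apply, LinearMap.BilinForm.apply_toDual_symm_apply]
  change q x = q₀ x + (q x + q₀ x)
  grind

lemma eq_zero_of_forall_eq_add_B {q : V g → ZMod 2} {v : V g} (hv : ∀ x, q x = q x + B v x) :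
    v = 0 :=
  eq_of_B_eq fun x => by simpa [B] using hv x

/-- The vectors `q₀ + q ∈ V`, `q ∈ S`. -/
def diffSet (S : Set (V g → ZMod 2)) (q₀ : V g → ZMod 2) : Set (V g) :=
  {v | ∃ q ∈ S, ∀ x, q x = q₀ x + B v x}

/-- Any three distinct `q₁, q₂, q₃ ∈ S` satisfy `⟨q₁ + q₂, q₁ + q₃⟩ = 0`. -/
def IsTotallySyzygetic (S : Set (V g → ZMod 2)) : Prop :=
  ∀ q1 ∈ S, ∀ q2 ∈ S, ∀ q3 ∈ S, q1 ≠ q2 → q1 ≠ q3 → q2 ≠ q3 →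
    ∀ v12 v13 : V g, (∀ x, q2 x = q1 x + B v12 x) → (∀ x, q3 x = q1 x + B v13 x) →
      B v12 v13 = 0

lemma IsTotallySyzygetic.B_eq_zero {S : Set (V g → ZMod 2)} (hsyz : IsTotallySyzygetic S)
    {q₀ : V g → ZMod 2} (hq₀ : q₀ ∈ S) {v v' : V g} (hv : v ∈ diffSet S q₀)
    (hv' : v' ∈ diffSet S q₀) : B v v' = 0 := by
  obtain ⟨q, hq, hqv⟩ := hv
  obtain ⟨q', hq', hqv'⟩ := hv'
  by_cases hqq' : q = q'
  · subst hqq'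
    rw [eq_of_B_eq fun x => add_left_cancel ((hqv x).symm.trans (hqv' x)), B_self]
  by_cases hq0 : q = q₀
  · subst hq0
    simp [eq_zero_of_forall_eq_add_B hqv, B]
  by_cases hq0' : q' = q₀
  · subst hq0'
    simp [eq_zero_of_forall_eq_add_B hqv', B]
  exact hsyz q₀ hq₀ q hq q' hq' (Ne.symm hq0) (Ne.symm hq0') hqq' v v' hqv hqv'

lemma ncard_le_ncard_diffSet {S : Set (V g → ZMod 2)} (hS : ∀ q ∈ S, IsQuad q)
    {q₀ : V g → ZMod 2} (hq₀ : q₀ ∈ S) : S.ncard ≤ (diffSet S q₀).ncard := by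
  have hsub : S ⊆ (fun v x => q₀ x + B v x) '' diffSet S q₀ := fun q hq => by
    obtain ⟨v, hv⟩ := (hS q hq).exists_eq_add_B (hS q₀ hq₀)
    exact ⟨v, ⟨q, hq, hv⟩, funext fun x => (hv x).symm⟩
  exact (Set.ncard_le_ncard hsub).trans (Set.ncard_image_le (Set.toFinite _))

end QuadraticForms

theorem totally_syzygetic_set_bound_general (g : ℕ)
    (S : Set (V g → ZMod 2))
    (hS : ∀ q ∈ S, IsQuad q)
    (hsyz : ∀ q1 ∈ S, ∀ q2 ∈ S, ∀ q3 ∈ S, q1 ≠ q2 → q1 ≠ q3 → q2 ≠ q3 →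
      ∀ v12 v13 : V g, (∀ x, q2 x = q1 x + B v12 x) → (∀ x, q3 x = q1 x + B v13 x) →
        B v12 v13 = 0)
    (q0 : V g → ZMod 2) (hq0 : q0 ∈ S) :
    (∀ w ∈ Submodule.span (ZMod 2) {v : V g | ∃ q ∈ S, ∀ x, q x = q0 x + B v x},
      ∀ w' ∈ Submodule.span (ZMod 2) {v : V g | ∃ q ∈ S, ∀ x, q x = q0 x + B v x},
        B w w' = 0) ∧
    Nat.card S ≤ 2 ^ g := by
  set W := Submodule.span (ZMod 2) (diffSet S q0)
  have hiso : W ≤ (Bform g).orthogonal W :=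
    LinearMap.BilinForm.span_le_orthogonal_span fun _ hv _ hv' =>
      IsTotallySyzygetic.B_eq_zero hsyz hq0 hv hv'
  refine ⟨fun w hw w' hw' => hiso hw' w hw, ?_⟩
  have hdim : Module.finrank (ZMod 2) W ≤ g := by
    have := LinearMap.BilinForm.two_mul_finrank_le_of_le_orthogonal Bform_nondegenerate hiso
    rw [finrank_V] at this
    omega
  calc Nat.card S = S.ncard := Nat.card_coe_set_eq S
    _ ≤ (diffSet S q0).ncard := ncard_le_ncard_diffSet hS hq0
    _ ≤ (W : Set (V g)).ncard := Set.ncard_le_ncard Submodule.subset_span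
    _ = 2 ^ Module.finrank (ZMod 2) W := by
      rw [← Nat.card_coe_set_eq, SetLike.coe_sort_coe, Module.natCard_eq_pow_finrank (K := ZMod 2),
        Nat.card_zmod]
    _ ≤ 2 ^ g := Nat.pow_le_pow_right two_pos hdim

theorem totally_syzygetic_set_bound (g : ℕ) (hg : 1 ≤ g)
    (S : Set (V g → ZMod 2))
    (hS : ∀ q ∈ S, IsQuad q)
    (hsyz : ∀ q1 ∈ S, ∀ q2 ∈ S, ∀ q3 ∈ S, q1 ≠ q2 → q1 ≠ q3 → q2 ≠ q3 →
      ∀ v12 v13 : V g, (∀ x, q2 x = q1 x + B v12 x) → (∀ x, q3 x = q1 x + B v13 x) →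
        B v12 v13 = 0)
    (q0 : V g → ZMod 2) (hq0 : q0 ∈ S) :
    (∀ w ∈ Submodule.span (ZMod 2) {v : V g | ∃ q ∈ S, ∀ x, q x = q0 x + B v x},
      ∀ w' ∈ Submodule.span (ZMod 2) {v : V g | ∃ q ∈ S, ∀ x, q x = q0 x + B v x},
        B w w' = 0) ∧
    Nat.card S ≤ 2 ^ g :=
  totally_syzygetic_set_bound_general g S hS hsyz q0 hq0
end
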